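/- arXiv:1411.7117 — 4 statements merged into one kernel-verified Lean document; each statement's English description precedes it below -/
import Mathlib

section
/- Discrete Dubois-Raymond lemma: let F : {0, …, N} → ℝ be a discrete function such that h · Σ_{k=0}^{N−1} F_k · G_k = 0 for every discrete function G : {0, …, N} → ℝ with G_0 = G_N = 0. Then F_k = 0 for all k = 1, …, N−1. -/
/-- Discrete Dubois-Raymond lemma: if
`h · Σ_{k=0}^{N−1} F_k G_k = 0` for every discrete variation `G`
(`G_0 = G_N = 0`), then `F_k = 0` for `k = 1, …, N−1`. -/
theorem stmt11 (a b : ℝ) (hab : a < b) (N : ℕ) (hN : 2 ≤ N)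
    (h : ℝ) (hh : h = (b - a) / N)
    (F : ℕ → ℝ)
    (hF : ∀ G : ℕ → ℝ, G 0 = 0 → G N = 0 →
      h * ∑ k ∈ Finset.range N, F k * G k = 0) :
    ∀ k, 1 ≤ k → k ≤ N - 1 → F k = 0 := by
  intro k hk1 hk2
  have hkN : k < N := lt_of_le_of_lt hk2 (Nat.sub_lt (by omega) one_pos)
  have hh0 : h ≠ 0 := by
    rw [hh]
    have : (0:ℝ) < N := by positivity
    have : (0:ℝ) < b - a := by linarith
    positivity
  have key := hF (fun j => if j = k then F k else 0)
    (by simp; omega) (by simp; omega)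
  have hsum : ∑ j ∈ Finset.range N, F j * (if j = k then F k else 0) = F k * F k := by
    rw [Finset.sum_eq_single k]
    · simp
    · intro b _ hb; simp [hb]
    · intro hk; exact absurd (Finset.mem_range.mpr hkN) hk
  rw [hsum] at key
  have := mul_eq_zero.mp key
  rcases this with h1 | h2
  · exact absurd h1 hh0
  · exact pow_eq_zero_iff (n := 2) (by norm_num) |>.mp (by rw [pow_two]; exact h2)
end

section
/- Discrete Euler-Lagrange equation: let L : ℝ × ℝ × ℝ → ℝ, written L(t, x, v), be continuously differentiable, and denote by ∂L/∂x and ∂L/∂v its partial derivatives in the second and third arguments. For a discrete function X : {0, …, N} → ℝ define the discrete action 𝓛_Δ(X) = h · Σ_{k=0}^{N−1} L(t_k, X_k, (ΔX)_k). Then X is a discrete critical point — i.e. for every discrete variation H : {0, …, N} → ℝ with H_0 = H_N = 0, the function ε ↦ 𝓛_Δ(X + ε·H) has derivative 0 at ε = 0 — if and only if X satisfies the discrete Euler-Lagrange equation: for every k = 1, …, N−1, ( ∂L/∂v(t_k, X_k, (ΔX)_k) − ∂L/∂v(t_{k−1}, X_{k−1}, (ΔX)_{k−1}) ) / h = ∂L/∂x(t_k,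 X_k, (ΔX)_k). -/
/-!
By the chain rule, the derivative at `ε = 0` of the action along a variation `H` is
`h · Σ_k (∂ₓL_k H_k + ∂ᵥL_k (ΔH)_k)`. Summation by parts, using `H_0 = H_N = 0`, rewrites it as
`Σ_k (h ∂ₓL_k − (∂ᵥL_k − ∂ᵥL_{k−1})) H_k`, and this vanishes for every such `H` iff each
coefficient with `1 ≤ k ≤ N − 1` does (test with the indicator of `k`).
-/

open Finset

-- The `k = 0` term on the right reads `A (0 - 1) = A 0`; it is harmless since `H 0 = 0`.
theorem sum_mul_sub_eq_neg_sum_sub_mul {R : Type*} [CommRing R] (A H : ℕ → R) {N : ℕ}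
    (h0 : H 0 = 0) (hN : H N = 0) :
    ∑ k ∈ range N, A k * (H (k + 1) - H k) = -∑ k ∈ range N, (A k - A (k - 1)) * H k := by
  have htel := sum_range_sub (fun j => A (j - 1) * H j) N
  simp only [Nat.add_sub_cancel, h0, hN, mul_zero, sub_zero] at htel
  rw [eq_neg_iff_add_eq_zero, ← sum_add_distrib, ← htel]
  exact sum_congr rfl fun k _ => by ring

theorem forall_sum_mul_eq_zero_iff {R : Type*} [Semiring R] (E : ℕ → R) (N : ℕ) :
    (∀ H : ℕ → R, H 0 = 0 → H N = 0 → ∑ k ∈ range N, E k * H k = 0) ↔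
      ∀ k, 1 ≤ k → k < N → E k = 0 := by
  constructor
  · intro hE k hk1 hkN
    simpa [Pi.single_apply, hkN] using
      hE (Pi.single k 1) (by simp [Pi.single_apply]; omega) (by simp [Pi.single_apply]; omega)
  · intro hE H h0 _
    refine sum_eq_zero fun k hk => ?_
    rcases Nat.eq_zero_or_pos k with rfl | hk1
    · rw [h0, mul_zero]
    · rw [hE k hk1 (mem_range.mp hk), zero_mul]

theorem hasDerivAt_directional_of_partials {L : ℝ → ℝ → ℝ → ℝ} {s x v lx lv : ℝ}
    (hL : DifferentiableAt ℝ (fun p : ℝ × ℝ × ℝ => L p.1 p.2.1 p.2.2) (s, x, v))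
    (hLx : HasDerivAt (fun y => L s y v) lx x) (hLv : HasDerivAt (fun w => L s x w) lv v)
    (H W : ℝ) :
    HasDerivAt (fun ε => L s (x + ε * H) (v + ε * W)) (lx * H + lv * W) 0 := by
  obtain ⟨L', hL'⟩ : ∃ L', HasFDerivAt (fun p : ℝ × ℝ × ℝ => L p.1 p.2.1 p.2.2) L' (s, x, v) :=
    ⟨_, hL.hasFDerivAt⟩
  have hx : L' (0, 1, 0) = lx := by
    have hcurve := (hasDerivAt_const x s).prodMk ((hasDerivAt_id' x).prodMk (hasDerivAt_const x v))
    exact (hL'.comp_hasDerivAt_of_eq x hcurve rfl).unique hLx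
  have hv : L' (0, 0, 1) = lv := by
    have hcurve := (hasDerivAt_const v s).prodMk ((hasDerivAt_const v x).prodMk (hasDerivAt_id' v))
    exact (hL'.comp_hasDerivAt_of_eq v hcurve rfl).unique hLv
  have hline : HasDerivAt (fun ε : ℝ => (s, x + ε * H, v + ε * W)) (0, H, W) 0 :=
    (hasDerivAt_const 0 s).prodMk (((hasDerivAt_mul_const H).const_add x).prodMk
      ((hasDerivAt_mul_const W).const_add v))
  have hval : L' (0, H, W) = lx * H + lv * W := by
    have hdir : ((0, H, W) : ℝ × ℝ × ℝ) = H • (0, 1, 0) + W • (0, 0, 1) := by simp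
    rw [hdir, map_add, map_smul, map_smul, hx, hv, smul_eq_mul, smul_eq_mul, mul_comm H,
      mul_comm W]
  exact hval ▸ hL'.comp_hasDerivAt_of_eq 0 hline (by simp)

noncomputable def discreteDeriv (h : ℝ) (X : ℕ → ℝ) (k : ℕ) : ℝ := (X (k + 1) - X k) / h

noncomputable def discreteAction (L : ℝ → ℝ → ℝ → ℝ) (t : ℕ → ℝ) (h : ℝ) (N : ℕ) (X : ℕ → ℝ) : ℝ :=
  h * ∑ k ∈ range N, L (t k) (X k) (discreteDeriv h X k)

def IsDiscreteCriticalPoint (L : ℝ → ℝ → ℝ → ℝ) (t : ℕ → ℝ) (h : ℝ) (N : ℕ) (X : ℕ → ℝ) :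
    Prop :=
  ∀ H : ℕ → ℝ, H 0 = 0 → H N = 0 →
    HasDerivAt (fun ε : ℝ => discreteAction L t h N (X + ε • H)) 0 0

theorem discreteDeriv_add_smul (h ε : ℝ) (X H : ℕ → ℝ) (k : ℕ) :
    discreteDeriv h (X + ε • H) k = discreteDeriv h X k + ε * discreteDeriv h H k := by
  simp only [discreteDeriv, Pi.add_apply, Pi.smul_apply, smul_eq_mul]
  ring

section EulerLagrange

variable {L Lx Lv : ℝ → ℝ → ℝ → ℝ} {t : ℕ → ℝ} {h : ℝ} {N : ℕ}

theorem hasDerivAt_discreteAction_add_smul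
    (hL : Differentiable ℝ (fun p : ℝ × ℝ × ℝ => L p.1 p.2.1 p.2.2))
    (hLx : ∀ s x v, HasDerivAt (fun y => L s y v) (Lx s x v) x)
    (hLv : ∀ s x v, HasDerivAt (fun w => L s x w) (Lv s x v) v)
    (hh : h ≠ 0) (X H : ℕ → ℝ) (h0 : H 0 = 0) (hN : H N = 0) :
    HasDerivAt (fun ε : ℝ => discreteAction L t h N (X + ε • H))
      (∑ k ∈ range N, (h * Lx (t k) (X k) (discreteDeriv h X k)
        - (Lv (t k) (X k) (discreteDeriv h X k)
          - Lv (t (k - 1)) (X (k - 1)) (discreteDeriv h X (k - 1)))) * H k) 0 := by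
  set A : ℕ → ℝ := fun k => Lv (t k) (X k) (discreteDeriv h X k)
  set B : ℕ → ℝ := fun k => Lx (t k) (X k) (discreteDeriv h X k)
  have hvar : HasDerivAt (fun ε : ℝ => discreteAction L t h N (X + ε • H))
      (h * ∑ k ∈ range N, (B k * H k + A k * discreteDeriv h H k)) 0 := by
    simp only [discreteAction, discreteDeriv_add_smul, Pi.add_apply, Pi.smul_apply, smul_eq_mul]
    exact (HasDerivAt.fun_sum fun k _ =>
      hasDerivAt_directional_of_partials (hL _) (hLx _ _ _) (hLv _ _ _) _ _).const_mul h
  convert hvar using 1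
  calc ∑ k ∈ range N, (h * B k - (A k - A (k - 1))) * H k
      = ∑ k ∈ range N, h * B k * H k + ∑ k ∈ range N, A k * (H (k + 1) - H k) := by
        rw [sum_mul_sub_eq_neg_sum_sub_mul A H h0 hN, ← sub_eq_add_neg, ← sum_sub_distrib]
        exact sum_congr rfl fun k _ => by ring
    _ = h * ∑ k ∈ range N, (B k * H k + A k * discreteDeriv h H k) := by
        rw [mul_sum, ← sum_add_distrib]
        refine sum_congr rfl fun k _ => ?_
        simp only [discreteDeriv]
        field_simp

theorem isDiscreteCriticalPoint_iff
    (hL : Differentiable ℝ (fun p : ℝ × ℝ × ℝ => L p.1 p.2.1 p.2.2))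
    (hLx : ∀ s x v, HasDerivAt (fun y => L s y v) (Lx s x v) x)
    (hLv : ∀ s x v, HasDerivAt (fun w => L s x w) (Lv s x v) v)
    (hh : h ≠ 0) (X : ℕ → ℝ) :
    IsDiscreteCriticalPoint L t h N X ↔ ∀ k, 1 ≤ k → k < N →
      (Lv (t k) (X k) (discreteDeriv h X k)
        - Lv (t (k - 1)) (X (k - 1)) (discreteDeriv h X (k - 1))) / h
      = Lx (t k) (X k) (discreteDeriv h X k) := by
  calc IsDiscreteCriticalPoint L t h N X
      ↔ ∀ H : ℕ → ℝ, H 0 = 0 → H N = 0 → ∑ k ∈ range N, (h * Lx (t k) (X k) (discreteDeriv h X k)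
        - (Lv (t k) (X k) (discreteDeriv h X k)
          - Lv (t (k - 1)) (X (k - 1)) (discreteDeriv h X (k - 1)))) * H k = 0 :=
        forall₃_congr fun H h0 hN =>
          have hvar := hasDerivAt_discreteAction_add_smul hL hLx hLv hh X H h0 hN
          ⟨fun hcrit => hvar.unique hcrit, fun hzero => hzero ▸ hvar⟩
    _ ↔ _ := forall_sum_mul_eq_zero_iff _ N
    _ ↔ _ := forall₃_congr fun k _ _ => by rw [sub_eq_zero, div_eq_iff hh, eq_comm, mul_comm]

end EulerLagrange

theorem stmt13_general (a b : ℝ) (hab : a < b) (N : ℕ) (hN : 2 ≤ N)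
    (h : ℝ) (hh : h = (b - a) / N)
    (t : ℕ → ℝ)
    (L Lx Lv : ℝ → ℝ → ℝ → ℝ)
    (hL : ContDiff ℝ 1 (fun p : ℝ × ℝ × ℝ => L p.1 p.2.1 p.2.2))
    (hLx : ∀ s x v, HasDerivAt (fun y => L s y v) (Lx s x v) x)
    (hLv : ∀ s x v, HasDerivAt (fun w => L s x w) (Lv s x v) v)
    (X : ℕ → ℝ) :
    (∀ H : ℕ → ℝ, H 0 = 0 → H N = 0 →
      HasDerivAt
        (fun ε : ℝ => h * ∑ k ∈ Finset.range N,
          L (t k) (X k + ε * H k)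
            ((X (k + 1) + ε * H (k + 1) - (X k + ε * H k)) / h))
        0 0) ↔
    (∀ k, 1 ≤ k → k ≤ N - 1 →
      (Lv (t k) (X k) ((X (k + 1) - X k) / h)
        - Lv (t (k - 1)) (X (k - 1)) ((X k - X (k - 1)) / h)) / h
      = Lx (t k) (X k) ((X (k + 1) - X k) / h)) := by
  have hh0 : h ≠ 0 := by
    rw [hh]
    exact div_ne_zero (sub_ne_zero.mpr hab.ne') (Nat.cast_ne_zero.mpr (by omega))
  change IsDiscreteCriticalPoint L t h N X ↔ _
  rw [isDiscreteCriticalPoint_iff (hL.differentiable one_ne_zero) hLx hLv hh0]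
  refine forall₂_congr fun k hk => ?_
  obtain ⟨j, rfl⟩ : ∃ j, k = j + 1 := ⟨k - 1, by omega⟩
  simp only [discreteDeriv, Nat.add_sub_cancel]
  exact imp_congr (by omega) Iff.rfl

/-- Discrete Euler–Lagrange equation: for a `C¹` Lagrangian
`L(t, x, v)` with partial derivatives `Lx = ∂L/∂x` and `Lv = ∂L/∂v`, a discrete
function `X` is a critical point of the discrete action
`𝓛_Δ(X) = h · Σ_{k=0}^{N−1} L(t_k, X_k, (ΔX)_k)` (i.e. for every discrete
variation `H` with `H_0 = H_N = 0`, the map `ε ↦ 𝓛_Δ(X + εH)` has derivative `0`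
at `ε = 0`) if and only if `X` satisfies the discrete Euler–Lagrange equation
`∇(Lv(t, X, ΔX))_k = Lx(t_k, X_k, (ΔX)_k)` for `k = 1, …, N−1`. -/
theorem stmt13 (a b : ℝ) (hab : a < b) (N : ℕ) (hN : 2 ≤ N)
    (h : ℝ) (hh : h = (b - a) / N)
    (t : ℕ → ℝ) (ht : ∀ k, t k = a + k * h)
    (L Lx Lv : ℝ → ℝ → ℝ → ℝ)
    (hL : ContDiff ℝ 1 (fun p : ℝ × ℝ × ℝ => L p.1 p.2.1 p.2.2))
    (hLx : ∀ s x v, HasDerivAt (fun y => L s y v) (Lx s x v) x)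
    (hLv : ∀ s x v, HasDerivAt (fun w => L s x w) (Lv s x v) v)
    (X : ℕ → ℝ) :
    (∀ H : ℕ → ℝ, H 0 = 0 → H N = 0 →
      HasDerivAt
        (fun ε : ℝ => h * ∑ k ∈ Finset.range N,
          L (t k) (X k + ε * H k)
            ((X (k + 1) + ε * H (k + 1) - (X k + ε * H k)) / h))
        0 0) ↔
    (∀ k, 1 ≤ k → k ≤ N - 1 →
      (Lv (t k) (X k) ((X (k + 1) - X k) / h)
        - Lv (t (k - 1)) (X (k - 1)) ((X k - X (k - 1)) / h)) / h
      = Lx (t k) (X k) ((X (k + 1) - X k) / h)) :=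
  stmt13_general a b hab N hN h hh t L Lx Lv hL hLx hLv X
end

section
/- Quadratic discrete differential embedding yields the trapezoidal and midpoint schemes: let N = 2d with d ≥ 1, let f : ℝ × ℝ → ℝ, and let X : {0, …, N} → ℝ. Then the quadratic discrete differential embedding equations hold, namely for every k = 0, …, d−1, 2·(X_{2k+1} − X_{2k})/h − (X_{2k+2} − X_{2k})/(2h) = f(t_{2k}, X_{2k}) and (X_{2k+2} − X_{2k})/(2h) = f(t_{2k+1}, X_{2k+1}), if and only if for every k = 0, …, d−1, X_{2k+1} = X_{2k} + (h/2)·( f(t_{2k}, X_{2k}) + f(t_{2k+1}, X_{2k+1}) ) (the one-step trapezoidal scheme) and X_{2k+2} = X_{2k} + 2h·f(t_{2k+1}, X_{2k+1}) (the one-step forward midpoint scheme). -/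
/-- The quadratic discrete differential embedding of `dx/dt = f(t,x)`
is equivalent to the one-step trapezoidal scheme together with the one-step
forward midpoint scheme. -/
theorem stmt14 (a b : ℝ) (hab : a < b) (d : ℕ) (hd : 1 ≤ d) (N : ℕ) (hNd : N = 2 * d)
    (h : ℝ) (hh : h = (b - a) / N)
    (t : ℕ → ℝ) (ht : ∀ k, t k = a + k * h)
    (f : ℝ → ℝ → ℝ) (X : ℕ → ℝ) :
    (∀ k < d,
      2 * (X (2 * k + 1) - X (2 * k)) / h - (X (2 * k + 2) - X (2 * k)) / (2 * h)
        = f (t (2 * k)) (X (2 * k)) ∧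
      (X (2 * k + 2) - X (2 * k)) / (2 * h) = f (t (2 * k + 1)) (X (2 * k + 1))) ↔
    (∀ k < d,
      X (2 * k + 1) = X (2 * k)
        + h / 2 * (f (t (2 * k)) (X (2 * k)) + f (t (2 * k + 1)) (X (2 * k + 1))) ∧
      X (2 * k + 2) = X (2 * k) + 2 * h * f (t (2 * k + 1)) (X (2 * k + 1))) := by
  have hN : (0:ℝ) < N := by
    exact_mod_cast Nat.pos_of_ne_zero (by omega)
  have hhpos : 0 < h := by rw [hh]; exact div_pos (by linarith) hN
  have hne : h ≠ 0 := ne_of_gt hhpos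
  constructor
  · intro H k hk
    obtain ⟨h1, h2⟩ := H k hk
    constructor
    · field_simp at h1 h2 ⊢; nlinarith [hhpos, mul_pos hhpos hhpos]
    · field_simp at h2 ⊢; linarith
  · intro H k hk
    obtain ⟨h1, h2⟩ := H k hk
    constructor
    · field_simp; nlinarith [hhpos, mul_pos hhpos hhpos]
    · field_simp; nlinarith [hhpos]
end

section
/- Quadratic discrete integral embedding yields the trapezoidal and midpoint schemes: let N = 2d with d ≥ 1, let f : ℝ × ℝ → ℝ, and let X : {0, …, N} → ℝ. Then the quadratic discrete integral embedding equations hold, namely X_{2k} = X_0 + Σ_{q=0}^{k−1} 2h·f(t_{2q+1}, X_{2q+1}) for every k = 1, …, d, and X_{2k+1} = X_0 + (h/2)·( f(t_{2k}, X_{2k}) + f(t_{2k+1}, X_{2k+1}) ) + Σ_{q=0}^{k−1} 2h·f(t_{2q+1}, X_{2q+1}) for every k = 0, …, d−1, if and only if for every k = 0, …, d−1, X_{2k+1} = X_{2k} + (h/2)·( f(t_{2k}, X_{2k}) + f(t_{2k+1}, X_{2k+1}) ) (the one-step trapezoidal scheme) and X_{2k+2} = X_{2k} + 2h·f(t_{2k+1},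 X_{2k+1}) (the one-step forward midpoint scheme). -/
/-- The quadratic discrete integral embedding of the integral form
`x(t) = x₀ + ∫ f(s,x(s)) ds` is equivalent to the one-step trapezoidal scheme
together with the one-step forward midpoint scheme. -/
theorem stmt15 (a b : ℝ) (hab : a < b) (d : ℕ) (hd : 1 ≤ d) (N : ℕ) (hNd : N = 2 * d)
    (h : ℝ) (hh : h = (b - a) / N)
    (t : ℕ → ℝ) (ht : ∀ k, t k = a + k * h)
    (f : ℝ → ℝ → ℝ) (X : ℕ → ℝ) :
    ((∀ k, 1 ≤ k → k ≤ d →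
        X (2 * k) = X 0
          + ∑ q ∈ Finset.range k, 2 * h * f (t (2 * q + 1)) (X (2 * q + 1))) ∧
      (∀ k < d,
        X (2 * k + 1) = X 0
          + h / 2 * (f (t (2 * k)) (X (2 * k)) + f (t (2 * k + 1)) (X (2 * k + 1)))
          + ∑ q ∈ Finset.range k, 2 * h * f (t (2 * q + 1)) (X (2 * q + 1)))) ↔
    (∀ k < d,
      X (2 * k + 1) = X (2 * k)
        + h / 2 * (f (t (2 * k)) (X (2 * k)) + f (t (2 * k + 1)) (X (2 * k + 1))) ∧
      X (2 * k + 2) = X (2 * k) + 2 * h * f (t (2 * k + 1)) (X (2 * k + 1))) := by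
  constructor
  · rintro ⟨he, ho⟩ k hk
    have hXe : ∀ k ≤ d, X (2 * k) = X 0
        + ∑ q ∈ Finset.range k, 2 * h * f (t (2 * q + 1)) (X (2 * q + 1)) := by
      intro k hk
      rcases Nat.eq_zero_or_pos k with rfl | hk1
      · simp
      · exact he k hk1 hk
    have h1 := hXe k (le_of_lt hk)
    have h2 := hXe (k + 1) hk
    have h3 := ho k hk
    rw [Finset.sum_range_succ] at h2
    constructor
    · rw [h1] at h3 ⊢; linarith [h3]
    · have he2 : 2 * (k + 1) = 2 * k + 2 := by ring
      rw [he2] at h2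
      rw [h2, h1]; ring
  · intro hs
    have hXe : ∀ k ≤ d, X (2 * k) = X 0
        + ∑ q ∈ Finset.range k, 2 * h * f (t (2 * q + 1)) (X (2 * q + 1)) := by
      intro k
      induction k with
      | zero => simp
      | succ n ih =>
        intro hn
        have h1 := ih (le_of_lt hn)
        have h2 := (hs n hn).2
        have he2 : 2 * (n + 1) = 2 * n + 2 := by ring
        rw [Finset.sum_range_succ, he2, h2, h1, add_assoc]
    refine ⟨fun k _ hk => hXe k hk, fun k hk => ?_⟩
    have h1 := hXe k (le_of_lt hk)
    have h3 := (hs k hk).1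
    rw [h1] at h3
    rw [h1]; linarith [h3]
end
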